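/- arXiv:2011.04493 — 4 statements merged into one kernel-verified Lean document; each statement's English description precedes it below -/
import Mathlib

section
/- Let M be a probability measure on a measurable space Z, S : Z → Z a measurable involution with S*M ≪ M, and define the acceptance function α(z) := min(1, d(S*M)/dM(z)). Then α(S(z)) · d(S*M)/dM(z) = α(z) for M-almost every z ∈ Z. -/
open MeasureTheory
open scoped ENNReal

/-! Pushing the pair `(S_*M, M)` forward by the involution `S` swaps it, so the density
`f = d(S_*M)/dM` satisfies `f ∘ S = dM/d(S_*M) = f⁻¹` almost everywhere. The identity is then
the pointwise fact `min 1 r⁻¹ * r = min 1 r` for `r < ∞`. -/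

theorem ENNReal.min_one_inv_mul_self {r : ℝ≥0∞} (hr : r ≠ ∞) : min 1 r⁻¹ * r = min 1 r := by
  rcases le_total r 1 with h | h
  · rw [min_eq_left (ENNReal.one_le_inv.mpr h), min_eq_right h, one_mul]
  · rw [min_eq_right (ENNReal.inv_le_one.mpr h), min_eq_left h,
      ENNReal.inv_mul_cancel (zero_lt_one.trans_le h).ne' hr]

namespace MeasureTheory.Measure

theorem rnDeriv_map_involutive_comp_ae_eq_inv {Z : Type*} [MeasurableSpace Z] {μ : Measure Z}
    [SigmaFinite μ] {S : Z → Z} (hS : Measurable S) (hinv : Function.Involutive S)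
    (hac : μ.map S ≪ μ) :
    (fun z ↦ (μ.map S).rnDeriv μ (S z)) =ᵐ[μ] ((μ.map S).rnDeriv μ)⁻¹ := by
  have hemb : MeasurableEmbedding S := (MeasurableEquiv.ofInvolutive S hinv hS).measurableEmbedding
  have : SigmaFinite (μ.map S) := hemb.sigmaFinite_map
  have hmap : (μ.map S).map S = μ := by
    rw [map_map hS hS, hinv.comp_self, map_id]
  have hpush : (fun z ↦ μ.rnDeriv (μ.map S) (S z)) =ᵐ[μ] (μ.map S).rnDeriv μ := by
    simpa only [hmap] using hemb.rnDeriv_map (μ.map S) μ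
  have hinv_push : (fun z ↦ ((μ.map S).rnDeriv μ (S z))⁻¹) =ᵐ[μ]
      fun z ↦ μ.rnDeriv (μ.map S) (S z) :=
    hemb.ae_map_iff.mp (inv_rnDeriv hac)
  filter_upwards [hinv_push.trans hpush] with z hz
  rw [Pi.inv_apply, ← hz, inv_inv]

end MeasureTheory.Measure

theorem acceptance_balance_identity {Z : Type*} [MeasurableSpace Z]
    (M : Measure Z) [IsProbabilityMeasure M]
    (S : Z → Z) (hS : Measurable S) (hinv : S ∘ S = id)
    (hac : M.map S ≪ M)
    (α : Z → ℝ≥0∞) (hα : ∀ z, α z = min 1 ((M.map S).rnDeriv M z)) :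
    ∀ᵐ z ∂M, α (S z) * (M.map S).rnDeriv M z = α z := by
  filter_upwards [Measure.rnDeriv_map_involutive_comp_ae_eq_inv hS (congrFun hinv) hac,
    Measure.rnDeriv_lt_top (M.map S) M] with z hSz hfin
  rw [hα, hα, hSz, Pi.inv_apply, ENNReal.min_one_inv_mul_self hfin.ne]
end

section
/- Let (X, Σ_X) and (Y, Σ_Y) be measurable spaces, μ a probability measure on X, V : X × Σ_Y → [0,1] a Markov kernel, and M(dq, dv) = V(q, dv) μ(dq) the associated measure on X × Y. Suppose S : X × Y → X × Y is a measurable involution with S*M ≪ M. Define α(q,v) := min(1, d(S*M)/dM(q,v)) and the Markov kernel P(q, dq̃) = ∫_Y α(q,v) δ_{Π₁(S(q,v))}(dq̃) V(q,dv) + δ_q(dq̃) ∫_Y (1 − α(q,v)) V(q, dv), where Π₁ is projection onto the first coordinate. Then P satisfies detailed balance with respect to μ: P(q, dq̃) μ(dq) = P(q̃, dq) μ(dq̃) as measures on X × X. -/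
open MeasureTheory ProbabilityTheory
open scoped ENNReal

/-!
Write `f = d(S_* M)/dM`. Because `S` is an involution, `f · (f ∘ S) = 1` holds `M`-a.e., hence
`f · min(1, f ∘ S) = min(1, f)`: the measure `min(1, f) · M` of accepted moves is `S`-invariant.
Each side of the detailed balance identity is the integral of `φ(q, Π₁ S(q,v))`, resp.
`φ(Π₁ S(q,v), q)`, against this measure plus a rejection term on the diagonal, which is symmetric;
the accepted parts agree by the invariance.
-/

theorem ENNReal.mul_min_one_of_mul_eq_one {a b : ℝ≥0∞} (h : a * b = 1) :
    a * min 1 b = min 1 a := by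
  obtain rfl : b = a⁻¹ := ENNReal.eq_inv_of_mul_eq_one_left (by rwa [mul_comm])
  rcases le_total a 1 with ha | ha
  · rw [min_eq_left (ENNReal.one_le_inv.2 ha), mul_one, min_eq_right ha]
  · rw [min_eq_right (ENNReal.inv_le_one.2 ha), h, min_eq_left ha]

namespace MeasureTheory.Measure

variable {Z Z' : Type*} [MeasurableSpace Z] [MeasurableSpace Z']

theorem map_withDensity_comp (ν : Measure Z) {S : Z → Z'} (hS : Measurable S)
    {g : Z' → ℝ≥0∞} (hg : Measurable g) :
    (ν.withDensity (g ∘ S)).map S = (ν.map S).withDensity g := by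
  ext A hA
  rw [map_apply hS hA, withDensity_apply _ (hS hA), withDensity_apply _ hA,
    setLIntegral_map hA hg hS]
  rfl

variable {M : Measure Z} [SigmaFinite M] {S : Z → Z}

theorem rnDeriv_map_mul_rnDeriv_map_comp_ae_eq_one (hS : Measurable S)
    (hinv : Function.Involutive S) (hac : M.map S ≪ M) :
    (M.map S).rnDeriv M * ((M.map S).rnDeriv M ∘ S) =ᵐ[M] 1 := by
  set f := (M.map S).rnDeriv M
  have hf : Measurable f := measurable_rnDeriv _ _
  have hwd : M.withDensity f = M.map S := withDensity_rnDeriv_eq _ _ hac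
  refine (withDensity_eq_iff_of_sigmaFinite (hf.mul (hf.comp hS)).aemeasurable
    aemeasurable_const).1 ?_
  calc M.withDensity (f * (f ∘ S)) = (M.map S).withDensity (f ∘ S) := by
        rw [withDensity_mul M hf (hf.comp hS), hwd]
    _ = (M.withDensity (f ∘ S ∘ S)).map S := (map_withDensity_comp M hS (hf.comp hS)).symm
    _ = (M.map S).map S := by rw [hinv.comp_self, Function.comp_id, hwd]
    _ = M.withDensity 1 := by rw [map_map hS hS, hinv.comp_self, map_id, withDensity_one]

theorem measurePreserving_withDensity_min_one_rnDeriv_map (hS : Measurable S)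
    (hinv : Function.Involutive S) (hac : M.map S ≪ M) :
    MeasurePreserving S (M.withDensity fun z => min 1 ((M.map S).rnDeriv M z))
      (M.withDensity fun z => min 1 ((M.map S).rnDeriv M z)) := by
  set f := (M.map S).rnDeriv M
  set g : Z → ℝ≥0∞ := fun z => min 1 (f z)
  have hf : Measurable f := measurable_rnDeriv _ _
  have hg : Measurable g := measurable_const.min hf
  refine ⟨hS, ?_⟩
  calc (M.withDensity g).map S = (M.withDensity ((g ∘ S) ∘ S)).map S := by
        rw [Function.comp_assoc, hinv.comp_self, Function.comp_id]
    _ = (M.withDensity f).withDensity (g ∘ S) := by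
        rw [map_withDensity_comp M hS (hg.comp hS), withDensity_rnDeriv_eq _ _ hac]
    _ = M.withDensity g := by
        rw [← withDensity_mul M hf (hg.comp hS)]
        refine withDensity_congr_ae ?_
        filter_upwards [rnDeriv_map_mul_rnDeriv_map_comp_ae_eq_one hS hinv hac] with z hz
        exact ENNReal.mul_min_one_of_mul_eq_one hz

end MeasureTheory.Measure

theorem MeasureTheory.lintegral_map_withDensity_add_smul_dirac {X Y : Type*}
    [MeasurableSpace X] [MeasurableSpace Y] (ν : Measure Y) {a : Y → ℝ≥0∞} (ha : Measurable a)
    {T : Y → X} (hT : Measurable T) (x : X) {ψ : X → ℝ≥0∞} (hψ : Measurable ψ) :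
    ∫⁻ y, ψ y ∂((ν.withDensity a).map T + (∫⁻ v, (1 - a v) ∂ν) • Measure.dirac x) =
      ∫⁻ v, a v * ψ (T v) ∂ν + ∫⁻ v, (1 - a v) * ψ x ∂ν := by
  rw [lintegral_add_measure, lintegral_map hψ hT,
    lintegral_withDensity_eq_lintegral_mul _ ha (g := fun v => ψ (T v)) (hψ.comp hT),
    lintegral_smul_measure, lintegral_dirac' x hψ, smul_eq_mul,
    lintegral_mul_const _ (f := fun v => 1 - a v) (measurable_const.sub ha)]
  rfl

theorem MeasureTheory.lintegral_lintegral_eq_lintegral_withDensity_add {X Y : Type*}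
    [MeasurableSpace X] [MeasurableSpace Y] (μ : Measure X) [SFinite μ]
    (V : Kernel X Y) [IsSFiniteKernel V] {S : X × Y → X × Y} (hS : Measurable S)
    {α : X → Y → ℝ≥0∞} (hα : Measurable (Function.uncurry α)) {P : X → Measure X}
    (hP : ∀ q, P q = ((V q).withDensity (α q)).map (fun v => (S (q, v)).1)
      + (∫⁻ v, (1 - α q v) ∂(V q)) • Measure.dirac q)
    {F : X → X → ℝ≥0∞} (hF : Measurable (Function.uncurry F)) :
    ∫⁻ q, ∫⁻ q', F q q' ∂(P q) ∂μ =
      ∫⁻ p, F p.1 (S p).1 ∂((μ.compProd V).withDensity (Function.uncurry α))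
        + ∫⁻ p, (1 - Function.uncurry α p) * F p.1 p.1 ∂(μ.compProd V) := by
  have hT : Measurable fun p : X × Y => (S p).1 := measurable_fst.comp hS
  have hmove : Measurable fun p : X × Y => F p.1 (S p).1 :=
    hF.comp (measurable_fst.prodMk hT)
  have hstay : Measurable fun p : X × Y => (1 - Function.uncurry α p) * F p.1 p.1 :=
    (measurable_const.sub hα).mul (hF.comp (measurable_fst.prodMk measurable_fst))
  rw [lintegral_withDensity_eq_lintegral_mul _ hα hmove, ← lintegral_add_left (hα.mul hmove),
    Measure.lintegral_compProd (by exact (hα.mul hmove).add hstay)]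
  refine lintegral_congr fun q => ?_
  rw [hP q, lintegral_map_withDensity_add_smul_dirac (V q) (a := α q)
    (hα.comp measurable_prodMk_left) (T := fun v => (S (q, v)).1)
    (hT.comp measurable_prodMk_left) q (ψ := F q) (hF.comp measurable_prodMk_left)]
  exact (lintegral_add_left ((hα.mul hmove).comp measurable_prodMk_left) _).symm

theorem detailed_balance_of_involution
    {X Y : Type*} [MeasurableSpace X] [MeasurableSpace Y]
    (μ : Measure X) [IsProbabilityMeasure μ]
    (V : Kernel X Y) [IsMarkovKernel V]
    (M : Measure (X × Y)) (hM : M = μ.compProd V)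
    (S : X × Y → X × Y) (hS : Measurable S) (hinv : S ∘ S = id)
    (hac : M.map S ≪ M)
    (α : X → Y → ℝ≥0∞)
    (hα : ∀ q v, α q v = min 1 ((M.map S).rnDeriv M (q, v)))
    (P : X → Measure X)
    (hP : ∀ q, P q =
      ((V q).withDensity (α q)).map (fun v => (S (q, v)).1)
        + (∫⁻ v, (1 - α q v) ∂(V q)) • Measure.dirac q) :
    ∀ φ : X → X → ℝ≥0∞, Measurable (Function.uncurry φ) →
      ∫⁻ q, ∫⁻ q', φ q q' ∂(P q) ∂μ = ∫⁻ q', ∫⁻ q, φ q q' ∂(P q') ∂μ := by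
  intro φ hφ
  subst hM
  have hSS : Function.Involutive S := congrFun hinv
  have hα_eq : Function.uncurry α = fun p => min 1 (((μ.compProd V).map S).rnDeriv _ p) :=
    funext fun p => hα p.1 p.2
  have hα_meas : Measurable (Function.uncurry α) :=
    hα_eq ▸ measurable_const.min (Measure.measurable_rnDeriv _ _)
  have hpres := Measure.measurePreserving_withDensity_min_one_rnDeriv_map hS hSS hac
  rw [← hα_eq] at hpres
  rw [lintegral_lintegral_eq_lintegral_withDensity_add μ V hS hα_meas hP hφ,
    lintegral_lintegral_eq_lintegral_withDensity_add μ V hS hα_meas hP (F := fun q' q => φ q q')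
      (hφ.comp measurable_swap), ← hpres.lintegral_comp (f := fun p => φ p.1 (S p).1)
      (hφ.comp (measurable_fst.prodMk (measurable_fst.comp hS)))]
  simp only [hSS _]
end

section
/- Let X and Y be sets and F : X × Y → X a map such that for each fixed q ∈ X the map F(q, ·) : Y → X is injective with image equal to X (i.e., bijective onto X). Then there exists a unique map S : X × Y → X × Y such that Π₁ ∘ S = F and S ∘ S = identity, given explicitly by S(q, v) = (F(q, v), (F(F(q,v), ·))⁻¹(q)). -/
open Function

section

variable {X Y : Type*} [Nonempty Y]

noncomputable def involutionOver (F : X → Y → X) (p : X × Y) : X × Y :=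
  (F p.1 p.2, invFun (F (F p.1 p.2)) p.1)

theorem involutionOver_involutive {F : X → Y → X} (hF : ∀ q, Bijective (F q)) :
    Involutive (involutionOver F) := by
  rintro ⟨q, v⟩
  have hback : F (F q v) (invFun (F (F q v)) q) = q := rightInverse_invFun (hF _).2 q
  simp only [involutionOver, hback, leftInverse_invFun (hF q).1 v]

/-- An involution whose first coordinate is `F` is forced: `S (S p) = p` says that the second
coordinate of `S p` is sent back to `p.1` by `F (F p.1 p.2)`, which is injective. -/
theorem eq_involutionOver {F : X → Y → X} (hF : ∀ q, Injective (F q)) {S : X × Y → X × Y}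
    (hfst : ∀ p, (S p).1 = F p.1 p.2) (hS : Involutive S) : S = involutionOver F := by
  funext p
  have hback : F (F p.1 p.2) (S p).2 = p.1 := by
    rw [← hfst p, ← hfst (S p), hS p]
  have hsnd : (S p).2 = invFun (F (F p.1 p.2)) p.1 := calc
    (S p).2 = invFun (F (F p.1 p.2)) (F (F p.1 p.2) (S p).2) :=
      (leftInverse_invFun (hF _) _).symm
    _ = invFun (F (F p.1 p.2)) p.1 := by rw [hback]
  exact Prod.ext (hfst p) hsnd

end

theorem exists_unique_involution_over_proposal {X Y : Type*} [Nonempty Y]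
    (F : X → Y → X) (hF : ∀ q, Function.Bijective (F q)) :
    (((∀ p : X × Y, ((fun p : X × Y =>
          ((F p.1 p.2, Function.invFun (F (F p.1 p.2)) p.1) : X × Y)) p).1 = F p.1 p.2) ∧
      (fun p : X × Y => ((F p.1 p.2, Function.invFun (F (F p.1 p.2)) p.1) : X × Y)) ∘
        (fun p : X × Y => ((F p.1 p.2, Function.invFun (F (F p.1 p.2)) p.1) : X × Y)) = id)) ∧
    (∀ S : X × Y → X × Y,
      ((∀ p : X × Y, (S p).1 = F p.1 p.2) ∧ S ∘ S = id) →
      S = fun p : X × Y => ((F p.1 p.2, Function.invFun (F (F p.1 p.2)) p.1) : X × Y)) :=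
  ⟨⟨fun _ => rfl, (involutionOver_involutive hF).comp_self⟩,
    fun _ ⟨hfst, hS⟩ => eq_involutionOver (fun q => (hF q).1) hfst (congrFun hS)⟩
end

section
/- Let f : ℝ^N → ℝ^N be any C¹ map and define, for time steps δ₁, δ₂ > 0 and n ∈ ℕ, the maps Ξ¹_t(q,v) = (q, v − t f(q)) and Ξ²_t(q,v) = (cos(t) q + sin(t) v, −sin(t) q + cos(t) v) on ℝ^{2N}, the integrator Ŝ = (Ξ¹_{δ₁} ∘ Ξ²_{δ₂} ∘ Ξ¹_{δ₁})ⁿ, and the momentum flip R(q,v) = (q, −v). Then both R ∘ Ξ¹_t and R ∘ Ξ²_t are involutions for every t, and consequently S := R ∘ Ŝ is an involution on ℝ^{2N}. -/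
/-- The velocity-shift map `Ξ¹_t(q, v) = (q, v − t f(q))`. -/
def Xi1 {N : ℕ} (f : (Fin N → ℝ) → (Fin N → ℝ)) (t : ℝ) :
    (Fin N → ℝ) × (Fin N → ℝ) → (Fin N → ℝ) × (Fin N → ℝ) :=
  fun z => (z.1, z.2 - t • f z.1)

/-- The rotation map `Ξ²_t(q, v) = (cos t · q + sin t · v, −sin t · q + cos t · v)`. -/
noncomputable def Xi2 {N : ℕ} (t : ℝ) :
    (Fin N → ℝ) × (Fin N → ℝ) → (Fin N → ℝ) × (Fin N → ℝ) :=
  fun z => (Real.cos t • z.1 + Real.sin t • z.2, -Real.sin t • z.1 + Real.cos t • z.2)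

/-!
For an involution `R`, the map `R ∘ A` is an involution exactly when `A ∘ R ∘ A = R`, i.e. when
`R` conjugates `A` to its inverse. In this form reversibility visibly passes to iterates
`A^[n]` and to palindromic compositions `A ∘ B ∘ A`. The momentum flip reverses the velocity
shift because the shift does not depend on the velocity, and reverses the rotation because
conjugating by the flip turns the rotation by `t` into the rotation by `-t`.
-/

namespace Function.Involutive

variable {α : Type*} {R A B : α → α}

theorem comp_involutive_iff (hR : Involutive R) :
    Involutive (R ∘ A) ↔ ∀ z, A (R (A z)) = R z := by
  refine ⟨fun h z => ?_, fun h z => ?_⟩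
  · rw [← hR (A (R (A z)))]
    exact congrArg R (h z)
  · simp only [comp_apply, h, hR z]

theorem comp_iterate (hR : Involutive R) (hA : Involutive (R ∘ A)) (n : ℕ) :
    Involutive (R ∘ A^[n]) := by
  rw [hR.comp_involutive_iff] at hA ⊢
  induction n with
  | zero => exact fun _ => rfl
  | succ n ih =>
    intro z
    rw [iterate_succ_apply, iterate_succ_apply', hA, ih]

theorem comp_palindrome (hR : Involutive R) (hA : Involutive (R ∘ A))
    (hB : Involutive (R ∘ B)) : Involutive (R ∘ (A ∘ B ∘ A)) := by
  rw [hR.comp_involutive_iff] at hA hB ⊢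
  intro z
  simp only [comp_apply, hA, hB]

end Function.Involutive

theorem involutive_momentumFlip {E F : Type*} [InvolutiveNeg F] :
    Function.Involutive (fun z : E × F => (z.1, -z.2)) :=
  fun z => by simp

theorem involutive_momentumFlip_comp_Xi1 {N : ℕ} (f : (Fin N → ℝ) → (Fin N → ℝ)) (t : ℝ) :
    Function.Involutive ((fun z : (Fin N → ℝ) × (Fin N → ℝ) => (z.1, -z.2)) ∘ Xi1 f t) :=
  fun z => by simp [Xi1]

theorem involutive_momentumFlip_comp_Xi2 {N : ℕ} (t : ℝ) :
    Function.Involutive ((fun z : (Fin N → ℝ) × (Fin N → ℝ) => (z.1, -z.2)) ∘ Xi2 t) := by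
  intro z
  have h := Real.sin_sq_add_cos_sq t
  ext i
  · simp only [Xi2, Function.comp_apply, Pi.add_apply, Pi.smul_apply, Pi.neg_apply,
      smul_eq_mul]
    linear_combination z.1 i * h
  · simp only [Xi2, Function.comp_apply, Pi.add_apply, Pi.smul_apply, Pi.neg_apply,
      smul_eq_mul]
    linear_combination z.2 i * h

theorem momentum_flip_integrator_involution_general {N : ℕ}
    (f : (Fin N → ℝ) → (Fin N → ℝ))
    (δ₁ δ₂ : ℝ) (n : ℕ)
    (R : (Fin N → ℝ) × (Fin N → ℝ) → (Fin N → ℝ) × (Fin N → ℝ))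
    (hR : R = fun z => (z.1, -z.2))
    (Shat : (Fin N → ℝ) × (Fin N → ℝ) → (Fin N → ℝ) × (Fin N → ℝ))
    (hShat : Shat = (Xi1 f δ₁ ∘ Xi2 δ₂ ∘ Xi1 f δ₁)^[n]) :
    (∀ t : ℝ, (R ∘ Xi1 f t) ∘ (R ∘ Xi1 f t) = id) ∧
    (∀ t : ℝ, (R ∘ Xi2 (N := N) t) ∘ (R ∘ Xi2 (N := N) t) = id) ∧
    (R ∘ Shat) ∘ (R ∘ Shat) = id := by
  subst hR hShat
  have hR := involutive_momentumFlip (E := Fin N → ℝ) (F := Fin N → ℝ)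
  have h₁ := involutive_momentumFlip_comp_Xi1 f
  have h₂ := involutive_momentumFlip_comp_Xi2 (N := N)
  exact ⟨fun t => (h₁ t).comp_self, fun t => (h₂ t).comp_self,
    (hR.comp_iterate (hR.comp_palindrome (h₁ δ₁) (h₂ δ₂)) n).comp_self⟩

theorem momentum_flip_integrator_involution {N : ℕ}
    (f : (Fin N → ℝ) → (Fin N → ℝ)) (hf : ContDiff ℝ 1 f)
    (δ₁ δ₂ : ℝ) (hδ₁ : 0 < δ₁) (hδ₂ : 0 < δ₂) (n : ℕ)
    (R : (Fin N → ℝ) × (Fin N → ℝ) → (Fin N → ℝ) × (Fin N → ℝ))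
    (hR : R = fun z => (z.1, -z.2))
    (Shat : (Fin N → ℝ) × (Fin N → ℝ) → (Fin N → ℝ) × (Fin N → ℝ))
    (hShat : Shat = (Xi1 f δ₁ ∘ Xi2 δ₂ ∘ Xi1 f δ₁)^[n]) :
    (∀ t : ℝ, (R ∘ Xi1 f t) ∘ (R ∘ Xi1 f t) = id) ∧
    (∀ t : ℝ, (R ∘ Xi2 (N := N) t) ∘ (R ∘ Xi2 (N := N) t) = id) ∧
    (R ∘ Shat) ∘ (R ∘ Shat) = id :=
  momentum_flip_integrator_involution_general f δ₁ δ₂ n R hR Shat hShat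
end
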